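/- arXiv:1705.03088 — 2 statements merged into one kernel-verified Lean document; each statement's English description precedes it below -/
import Mathlib

section
/- Suppose that k^δ · max_{0 ≤ k0 < h(k)} |T_{k0,k}(n) − T*_{k0,k}(n)| → 0 in probability for some 1 < δ < 2, with h(k) = o(k). Then k^{δ−1} · max_{0 ≤ k0 < h(k)} | U_{k0,k}(n) − U*_{k0,k}(n) | → 0 in probability, where U_{k0,k}(n) = 2·|T_{k0,k}(n)^{k−k0−1} − 0.5| and U*_{k0,k}(n) = 2·|T*_{k0,k}(n)^{k−k0−1} − 0.5|. -/
open MeasureTheory ProbabilityTheory Filter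
open scoped ENNReal NNReal Topology BigOperators

noncomputable section

/-- `orderStat x j` : the `j`-th smallest among `x 0, …, x (n-1)` (1-indexed). -/
def orderStat {n : ℕ} (x : Fin n → ℝ) (j : ℕ) : ℝ :=
  ((Multiset.map x Finset.univ.val).sort (· ≤ ·)).getD (j - 1) 0

/-- The trimmed Hill estimator `ξ̂_{k0,k}(n)`. -/
def trimmedHill (n k0 k : ℕ) (x : Fin n → ℝ) : ℝ :=
  ((k0 + 1 : ℝ) / ((k : ℝ) - k0)) *
      Real.log (orderStat x (n - k0) / orderStat x (n - k)) +
    (1 / ((k : ℝ) - k0)) *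
      ∑ i ∈ Finset.Icc (k0 + 2) k,
        Real.log (orderStat x (n - i + 1) / orderStat x (n - k))

/-- `X` is an i.i.d. sample from the Pareto(σ,ξ) distribution. -/
def IIDPareto {Ω : Type*} [MeasurableSpace Ω] (P : Measure Ω) (σ ξ : ℝ) {n : ℕ}
    (X : Fin n → Ω → ℝ) : Prop :=
  iIndepFun X P ∧
    ∀ i, Measurable (X i) ∧ Measure.map (X i) P = paretoMeasure σ (1 / ξ)

def SlowlyVarying (l : ℝ → ℝ) : Prop :=
  ∀ lam > (0:ℝ), Tendsto (fun t => l (lam * t) / l t) atTop (𝓝 1)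

/-- the ratio statistic `T_{k0,k}(n)` built from the sample `x`. -/
def ratioT (n k0 k : ℕ) (x : Fin n → ℝ) : ℝ :=
  (((k : ℝ) - k0 - 1) * trimmedHill n (k0 + 1) k x) /
    (((k : ℝ) - k0) * trimmedHill n k0 k x)

/-- the statistic `U_{k0,k}(n) = 2 |T_{k0,k}(n)^{k−k0−1} − 0.5|`. -/
def statU (n k0 k : ℕ) (x : Fin n → ℝ) : ℝ :=
  2 * |ratioT n k0 k x ^ (k - k0 - 1) - 0.5|

/-!
The ideal-sample statistic `T*_{k0,k}(n)` always lies in `[0, 1]`: numerator and denominator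
are sums of the same nonnegative log-excesses, except that `k0 + 1` copies of the
`(k0+2)`-th largest one in the numerator are copies of the larger `(k0+1)`-th in the
denominator. If `|T − T*| ≤ c` with `k c ≤ 1`, then `|T^m − T*^m| ≤ m (1 + c)^{m−1} c ≤ e k c`
for `m = k − k0 − 1 ≤ k`, and `x ↦ 2|x − 0.5|` is `2`-Lipschitz, so
`k^{δ−1} max |U − U*| ≤ 6 k^δ max |T − T*|` whenever the right-hand side is at most `6`.
The Pareto(1,1) sample is almost surely positive, so this bound holds almost surely and
carries the convergence in probability over from `T` to `U`.
-/

section OrderStatistics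

variable {n : ℕ} (x : Fin n → ℝ)

theorem length_sort_map_univ : ((Multiset.map x Finset.univ.val).sort (· ≤ ·)).length = n := by
  simp

theorem exists_orderStat_eq {j : ℕ} (hj : 1 ≤ j) (hjn : j ≤ n) : ∃ i, orderStat x j = x i := by
  have hlt : j - 1 < ((Multiset.map x Finset.univ.val).sort (· ≤ ·)).length := by
    rw [length_sort_map_univ]; omega
  obtain ⟨i, -, hi⟩ := Multiset.mem_map.mp ((Multiset.mem_sort _).mp (List.getElem_mem hlt))
  exact ⟨i, by rw [orderStat, List.getD_eq_getElem _ _ hlt, hi]⟩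

theorem orderStat_pos {x : Fin n → ℝ} (hx : ∀ i, 0 < x i) {j : ℕ} (hj : 1 ≤ j) (hjn : j ≤ n) :
    0 < orderStat x j := by
  obtain ⟨i, hi⟩ := exists_orderStat_eq x hj hjn
  exact hi ▸ hx i

theorem orderStat_mono {j j' : ℕ} (hj : 1 ≤ j) (hjj' : j ≤ j') (hj'n : j' ≤ n) :
    orderStat x j ≤ orderStat x j' := by
  have hlen := length_sort_map_univ x
  unfold orderStat
  rw [List.getD_eq_getElem _ _ (by omega), List.getD_eq_getElem _ _ (by omega)]
  exact (Multiset.pairwise_sort _ _).sortedLE.getElem_le_getElem_of_le (by omega)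

end OrderStatistics

section RatioStatistic

variable {n k : ℕ} (x : Fin n → ℝ)

/-- `log (X_{n−i+1:n} / X_{n−k:n})`; `orderStat` counts from the smallest, so `n − i + 1` is the
`i`-th largest observation. -/
def logExcess (n k : ℕ) (x : Fin n → ℝ) (i : ℕ) : ℝ :=
  Real.log (orderStat x (n - i + 1) / orderStat x (n - k))

theorem sub_mul_trimmedHill {k0 : ℕ} (hk0 : k0 < k) (hk0n : k0 < n) :
    ((k : ℝ) - k0) * trimmedHill n k0 k x =
      (k0 + 1) * logExcess n k x (k0 + 1) + ∑ i ∈ Finset.Icc (k0 + 2) k, logExcess n k x i := by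
  have hk : (k : ℝ) - k0 ≠ 0 := sub_ne_zero.mpr (by exact_mod_cast hk0.ne')
  rw [logExcess, show n - (k0 + 1) + 1 = n - k0 by omega, trimmedHill]
  simp only [logExcess]
  field_simp

variable {x}

theorem logExcess_nonneg (hx : ∀ i, 0 < x i) (hkn : k < n) {i : ℕ} (hi : 1 ≤ i) (hik : i ≤ k) :
    0 ≤ logExcess n k x i :=
  Real.log_nonneg <| (one_le_div (orderStat_pos hx (by omega) (by omega))).mpr <|
    orderStat_mono x (by omega) (by omega) (by omega)

theorem logExcess_le_logExcess (hx : ∀ i, 0 < x i) (hkn : k < n) {i j : ℕ} (hi : 1 ≤ i)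
    (hij : i ≤ j) : logExcess n k x j ≤ logExcess n k x i := by
  have hpos := orderStat_pos hx (j := n - k) (by omega) (by omega)
  exact Real.log_le_log (div_pos (orderStat_pos hx (by omega) (by omega)) hpos)
    (div_le_div_of_nonneg_right (orderStat_mono x (by omega) (by omega) (by omega)) hpos.le)

theorem ratioT_mem_Icc (hx : ∀ i, 0 < x i) {k0 : ℕ} (hk0 : k0 + 2 ≤ k) (hkn : k < n) :
    ratioT n k0 k x ∈ Set.Icc 0 1 := by
  set r := logExcess n k x
  set S := ∑ i ∈ Finset.Icc (k0 + 3) k, r i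
  have hnum : ((k : ℝ) - k0 - 1) * trimmedHill n (k0 + 1) k x = (k0 + 2) * r (k0 + 2) + S := by
    have h := sub_mul_trimmedHill x (k := k) (k0 := k0 + 1) (by omega) (by omega)
    push_cast at h
    rw [sub_sub, h]
    ring
  have hden :
      ((k : ℝ) - k0) * trimmedHill n k0 k x = (k0 + 1) * r (k0 + 1) + (r (k0 + 2) + S) := by
    rw [sub_mul_trimmedHill x (by omega) (by omega),
      ← Finset.insert_Icc_add_one_left_eq_Icc (by omega : k0 + 2 ≤ k), Finset.sum_insert (by simp)]
    rfl
  have hS : 0 ≤ S := Finset.sum_nonneg fun i hi => by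
    rw [Finset.mem_Icc] at hi
    exact logExcess_nonneg hx hkn (by omega) hi.2
  have hr2 : 0 ≤ r (k0 + 2) := logExcess_nonneg hx hkn (by omega) hk0
  have hr21 : r (k0 + 2) ≤ r (k0 + 1) :=
    logExcess_le_logExcess hx hkn (by omega) (by omega : k0 + 1 ≤ k0 + 2)
  have hnum0 : 0 ≤ ((k : ℝ) - k0 - 1) * trimmedHill n (k0 + 1) k x := by rw [hnum]; positivity
  have hle : ((k : ℝ) - k0 - 1) * trimmedHill n (k0 + 1) k x ≤
      ((k : ℝ) - k0) * trimmedHill n k0 k x := by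
    rw [hnum, hden]; nlinarith
  exact ⟨div_nonneg hnum0 (hnum0.trans hle), div_le_one_of_le₀ hle (hnum0.trans hle)⟩

end RatioStatistic

theorem abs_pow_sub_pow_le_of_abs_le_one {a b c : ℝ} {m : ℕ} (hb : |b| ≤ 1) (hab : |a - b| ≤ c)
    (hmc : m * c ≤ 1) : |a ^ m - b ^ m| ≤ 3 * m * c := by
  have hc : 0 ≤ c := (abs_nonneg _).trans hab
  have hmax : max |a| |b| ≤ Real.exp c := by
    have ha : |a| ≤ 1 + c := by linarith [abs_sub_abs_le_abs_sub a b]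
    exact max_le (ha.trans (by linarith [Real.add_one_le_exp c])) (hb.trans (Real.one_le_exp hc))
  have hpow : max |a| |b| ^ (m - 1) ≤ 3 :=
    calc max |a| |b| ^ (m - 1) ≤ Real.exp c ^ m :=
          (pow_le_pow_left₀ (by positivity) hmax _).trans
            (pow_le_pow_right₀ (Real.one_le_exp hc) (Nat.sub_le m 1))
      _ = Real.exp (m * c) := (Real.exp_nat_mul c m).symm
      _ ≤ 3 := (Real.exp_le_exp.mpr hmc).trans Real.exp_one_lt_three.le
  calc |a ^ m - b ^ m| ≤ |a - b| * m * max |a| |b| ^ (m - 1) := abs_pow_sub_pow_le a b m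
    _ ≤ c * m * 3 := by gcongr
    _ = 3 * m * c := by ring

theorem abs_statU_sub_statU_le (n k0 k : ℕ) (x y : Fin n → ℝ) :
    |statU n k0 k x - statU n k0 k y| ≤
      2 * |ratioT n k0 k x ^ (k - k0 - 1) - ratioT n k0 k y ^ (k - k0 - 1)| := by
  rw [statU, statU, ← mul_sub, abs_mul, abs_two]
  refine mul_le_mul_of_nonneg_left ?_ zero_le_two
  simpa using abs_abs_sub_abs_le_abs_sub (ratioT n k0 k x ^ (k - k0 - 1) - 0.5)
    (ratioT n k0 k y ^ (k - k0 - 1) - 0.5)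

theorem Finset.le_ciSup₂ {ι α : Type*} [ConditionallyCompleteLattice α] {s : Finset ι}
    (f : ι → α) {i : ι} (hi : i ∈ s) : f i ≤ ⨆ j ∈ s, f j :=
  _root_.le_ciSup₂ (f := fun j (_ : j ∈ s) => f j) ((s.finite_toSet.image f).bddAbove.mono
    (by rintro _ ⟨_, ⟨j, rfl⟩, ⟨hj, rfl⟩⟩; exact ⟨j, hj, rfl⟩)) i hi

section Deviation

variable {n k N : ℕ} {x y : Fin n → ℝ}

theorem biSup_abs_statU_sub_le (hy : ∀ i, 0 < y i) (hN : N + 2 ≤ k) (hkn : k < n)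
    (hsmall : k * (⨆ k0 ∈ Finset.range N, |ratioT n k0 k x - ratioT n k0 k y|) ≤ 1) :
    (⨆ k0 ∈ Finset.range N, |statU n k0 k x - statU n k0 k y|) ≤
      6 * k * ⨆ k0 ∈ Finset.range N, |ratioT n k0 k x - ratioT n k0 k y| := by
  set D := ⨆ k0 ∈ Finset.range N, |ratioT n k0 k x - ratioT n k0 k y|
  have hD : 0 ≤ D := Real.iSup_nonneg fun _ => Real.iSup_nonneg fun _ => abs_nonneg _
  refine Real.iSup_le (fun k0 => Real.iSup_le (fun hk0N => ?_) (by positivity)) (by positivity)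
  have hk0 : k0 + 2 ≤ k := by rw [Finset.mem_range] at hk0N; omega
  have hT := ratioT_mem_Icc hy hk0 hkn
  have hmD : ((k - k0 - 1 : ℕ) : ℝ) * D ≤ 1 :=
    le_trans (by gcongr; omega) hsmall
  calc |statU n k0 k x - statU n k0 k y|
      ≤ 2 * |ratioT n k0 k x ^ (k - k0 - 1) - ratioT n k0 k y ^ (k - k0 - 1)| :=
        abs_statU_sub_statU_le n k0 k x y
    _ ≤ 2 * (3 * ((k - k0 - 1 : ℕ) : ℝ) * D) := by
        gcongr
        exact abs_pow_sub_pow_le_of_abs_le_one (abs_le.mpr ⟨by linarith [hT.1], hT.2⟩)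
          (Finset.le_ciSup₂ (fun k0 => |ratioT n k0 k x - ratioT n k0 k y|) hk0N) hmD
    _ ≤ 6 * k * D := by
        have : ((k - k0 - 1 : ℕ) : ℝ) ≤ k := by exact_mod_cast (by omega : k - k0 - 1 ≤ k)
        nlinarith

theorem rpow_sub_one_mul_biSup_abs_statU_sub_le {δ : ℝ} (hδ : 1 ≤ δ) (hy : ∀ i, 0 < y i)
    (hN : N + 2 ≤ k) (hkn : k < n)
    (hsmall : (k : ℝ) ^ δ * (⨆ k0 ∈ Finset.range N, |ratioT n k0 k x - ratioT n k0 k y|) ≤ 1) :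
    (k : ℝ) ^ (δ - 1) * (⨆ k0 ∈ Finset.range N, |statU n k0 k x - statU n k0 k y|) ≤
      6 * ((k : ℝ) ^ δ * ⨆ k0 ∈ Finset.range N, |ratioT n k0 k x - ratioT n k0 k y|) := by
  set D := ⨆ k0 ∈ Finset.range N, |ratioT n k0 k x - ratioT n k0 k y|
  have hD : 0 ≤ D := Real.iSup_nonneg fun _ => Real.iSup_nonneg fun _ => abs_nonneg _
  have hk : (1 : ℝ) ≤ k := by exact_mod_cast (by omega : 1 ≤ k)
  have hkδ : (k : ℝ) ≤ (k : ℝ) ^ δ := Real.self_le_rpow_of_one_le hk hδ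
  calc (k : ℝ) ^ (δ - 1) * (⨆ k0 ∈ Finset.range N, |statU n k0 k x - statU n k0 k y|)
      ≤ (k : ℝ) ^ (δ - 1) * (6 * k * D) := by
        gcongr
        exact biSup_abs_statU_sub_le hy hN hkn (le_trans (by gcongr) hsmall)
    _ = 6 * ((k : ℝ) ^ δ * D) := by
        rw [Real.rpow_sub_one (by positivity)]
        field_simp

end Deviation

theorem IIDPareto.ae_le {Ω : Type*} [MeasurableSpace Ω] {P : Measure Ω} {σ ξ : ℝ} {n : ℕ}
    {X : Fin n → Ω → ℝ} (hX : IIDPareto P σ ξ X) : ∀ᵐ ω ∂P, ∀ i, σ ≤ X i ω := by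
  rw [ae_all_iff]
  intro i
  obtain ⟨hmeas, hmap⟩ := hX.2 i
  have hnull : P (X i ⁻¹' Set.Iio σ) = 0 := by
    rw [← Measure.map_apply hmeas measurableSet_Iio, hmap, paretoMeasure,
      withDensity_apply _ measurableSet_Iio]
    exact lintegral_paretoPDF_of_le le_rfl
  filter_upwards [measure_eq_zero_iff_ae_notMem.mp hnull] with ω hω
  exact not_lt.mp hω

theorem tendstoInMeasure_zero_of_abs_le_mul {α ι : Type*} [MeasurableSpace α] {μ : Measure α}
    {l : Filter ι} {f g : ι → α → ℝ} (C : ℝ) (hg : TendstoInMeasure μ g l (fun _ => 0))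
    (hfg : ∀ᶠ i in l, ∀ᵐ x ∂μ, |g i x| ≤ 1 → |f i x| ≤ C * |g i x|) :
    TendstoInMeasure μ f l (fun _ => 0) := by
  rw [tendstoInMeasure_iff_norm] at hg ⊢
  intro ε hε
  set η := min 1 (ε / (|C| + 1))
  have hη : 0 < η := by positivity
  refine tendsto_of_tendsto_of_tendsto_of_le_of_le' tendsto_const_nhds (hg η hη)
    (Eventually.of_forall fun _ => zero_le) ?_
  filter_upwards [hfg] with i hi
  refine measure_mono_ae (hi.mono fun x hx (hεx : ε ≤ ‖f i x - 0‖) => ?_)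
  show η ≤ ‖g i x - 0‖
  rw [sub_zero, Real.norm_eq_abs] at hεx ⊢
  by_contra! hlt
  have hCη : (|C| + 1) * η ≤ ε := (le_div_iff₀' (by positivity)).mp (min_le_right _ _)
  have hf := hx (hlt.le.trans (min_le_left _ _))
  have hCg : C * |g i x| ≤ |C| * η :=
    (mul_le_mul_of_nonneg_right (le_abs_self C) (abs_nonneg _)).trans
      (mul_le_mul_of_nonneg_left hlt.le (abs_nonneg C))
  linarith

theorem eventually_add_le_of_tendsto_div_zero {ι : Type*} {l : Filter ι} {a b : ι → ℕ}
    (hab : Tendsto (fun i => (a i : ℝ) / b i) l (𝓝 0)) (hb : Tendsto b l atTop) (c : ℕ) :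
    ∀ᶠ i in l, a i + c ≤ b i := by
  filter_upwards [hab.eventually_lt_const (by norm_num : (0 : ℝ) < 1 / 2),
    hb.eventually_ge_atTop (2 * c + 1)] with i hi hbi
  have hbi' : (2 * c + 1 : ℝ) ≤ b i := by exact_mod_cast hbi
  rw [div_lt_iff₀ (by linarith)] at hi
  exact_mod_cast (by linarith : (a i : ℝ) + c ≤ b i)

theorem statU_uniform_convergence_general
    {Ω : Type*} [MeasurableSpace Ω] (P : Measure Ω)
    (ξ δ : ℝ) (hδ1 : 1 < δ)
    (L : ℝ → ℝ)
    (n k : ℕ → ℕ) (h : ℕ → ℕ)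
    (hkinf : Tendsto k atTop atTop)
    (hkltn : ∀ m, k m < n m)
    (hh : Tendsto (fun m => (h (k m) : ℝ) / (k m : ℝ)) atTop (𝓝 0))
    (Y : ∀ m, Fin (n m) → Ω → ℝ) (hY : ∀ m, IIDPareto P 1 1 (Y m))
    (hT : TendstoInMeasure P
      (fun m ω => (k m : ℝ) ^ δ *
        ⨆ k0 ∈ Finset.range (h (k m)),
          |ratioT (n m) k0 (k m) (fun i => (Y m i ω) ^ ξ * L (Y m i ω)) -
            ratioT (n m) k0 (k m) (fun i => (Y m i ω) ^ ξ)|)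
      atTop (fun _ => 0)) :
    TendstoInMeasure P
      (fun m ω => (k m : ℝ) ^ (δ - 1) *
        ⨆ k0 ∈ Finset.range (h (k m)),
          |statU (n m) k0 (k m) (fun i => (Y m i ω) ^ ξ * L (Y m i ω)) -
            statU (n m) k0 (k m) (fun i => (Y m i ω) ^ ξ)|)
      atTop (fun _ => 0) := by
  refine tendstoInMeasure_zero_of_abs_le_mul 6 hT ?_
  filter_upwards [eventually_add_le_of_tendsto_div_zero hh hkinf 2] with m hm
  filter_upwards [(hY m).ae_le] with ω hω hsmall
  have hy : ∀ i, 0 < Y m i ω ^ ξ := fun i => Real.rpow_pos_of_pos (one_pos.trans_le (hω i)) ξ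
  have hsup_nonneg (v : ℕ → ℝ) : 0 ≤ ⨆ k0 ∈ Finset.range (h (k m)), |v k0| :=
    Real.iSup_nonneg fun _ => Real.iSup_nonneg fun _ => abs_nonneg _
  rw [abs_of_nonneg (mul_nonneg (by positivity) (hsup_nonneg _))] at hsmall ⊢
  rw [abs_of_nonneg (mul_nonneg (by positivity) (hsup_nonneg _))]
  exact rpow_sub_one_mul_biSup_abs_statU_sub_le hδ1.le hy hm (hkltn m) hsmall

/-- If `k^δ max_{0≤k0<h(k)} |T_{k0,k}(n) − T*_{k0,k}(n)| → 0` in probability for some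
`1 < δ < 2` with `h(k) = o(k)`, then
`k^{δ−1} max_{0≤k0<h(k)} |U_{k0,k}(n) − U*_{k0,k}(n)| → 0` in probability. -/
theorem statU_uniform_convergence
    {Ω : Type*} [MeasurableSpace Ω] (P : Measure Ω) [IsProbabilityMeasure P]
    (ξ δ : ℝ) (hξ : 0 < ξ) (hδ1 : 1 < δ) (hδ2 : δ < 2)
    (L : ℝ → ℝ) (hL : SlowlyVarying L)
    (n k : ℕ → ℕ) (h : ℕ → ℕ)
    (hkinf : Tendsto k atTop atTop) (hninf : Tendsto n atTop atTop)
    (hkn : Tendsto (fun m => (k m : ℝ) / (n m : ℝ)) atTop (𝓝 0))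
    (hkltn : ∀ m, k m < n m)
    (hh : Tendsto (fun m => (h (k m) : ℝ) / (k m : ℝ)) atTop (𝓝 0))
    (Y : ∀ m, Fin (n m) → Ω → ℝ) (hY : ∀ m, IIDPareto P 1 1 (Y m))
    (hT : TendstoInMeasure P
      (fun m ω => (k m : ℝ) ^ δ *
        ⨆ k0 ∈ Finset.range (h (k m)),
          |ratioT (n m) k0 (k m) (fun i => (Y m i ω) ^ ξ * L (Y m i ω)) -
            ratioT (n m) k0 (k m) (fun i => (Y m i ω) ^ ξ)|)
      atTop (fun _ => 0)) :
    TendstoInMeasure P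
      (fun m ω => (k m : ℝ) ^ (δ - 1) *
        ⨆ k0 ∈ Finset.range (h (k m)),
          |statU (n m) k0 (k m) (fun i => (Y m i ω) ^ ξ * L (Y m i ω)) -
            statU (n m) k0 (k m) (fun i => (Y m i ω) ^ ξ)|)
      atTop (fun _ => 0) :=
  statU_uniform_convergence_general P ξ δ hδ1 L n k h hkinf hkltn hh Y hY hT

end
end

section
/- Let Γ_i = E_1 + … + E_i where E_1, E_2, … are i.i.d. standard exponential random variables. Then for every ρ > 0, (1/m)·Σ_{i=1}^{m} (Γ_{i+1}/Γ_{m+1})^{ρ} → 1/(1+ρ) almost surely as m → ∞; equivalently, sup_{m ≥ M} | (1/m)·Σ_{i=1}^{m} (Γ_{i+1}/Γ_{m+1})^{ρ} − 1/(1+ρ) | → 0 almost surely as M → ∞. -/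
open MeasureTheory ProbabilityTheory Filter
open scoped ENNReal NNReal Topology BigOperators

noncomputable section

/-- i.i.d. standard exponential sequence. -/
def IIDStdExp {Ω : Type*} [MeasurableSpace Ω] (P : Measure Ω) (E : ℕ → Ω → ℝ) : Prop :=
  iIndepFun E P ∧
    ∀ i, Measurable (E i) ∧ Measure.map (E i) P = expMeasure 1

/-- partial sums `Γ_j = E_1 + … + E_j`. -/
def gammaSum {Ω : Type*} (E : ℕ → Ω → ℝ) (j : ℕ) (ω : Ω) : ℝ :=
  ∑ i ∈ Finset.range j, E i ω

/-! The strong law of large numbers gives `Γ_n / n → 1` almost surely. For any positive sequence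
with `b n / n → L > 0`, write `(b i / b m) ^ ρ = c i * (i / m) ^ ρ / c m` with
`c n = (b n / n) ^ ρ → L ^ ρ`: the mean becomes a Cesàro mean of the `c i`, weighted by the
Riemann sum of `x ^ ρ` on `[0, 1]`, so it converges to
`L ^ ρ * (∫₀¹ x ^ ρ dx) / L ^ ρ = 1 / (1 + ρ)`. -/

open Real

lemma sum_Icc_one_eq_sum_range {M : Type*} [AddCommMonoid M] (g : ℕ → M) (m : ℕ) :
    ∑ i ∈ Finset.Icc 1 m, g i = ∑ k ∈ Finset.range m, g (k + 1) := by
  induction m with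
  | zero => simp
  | succ m ih => rw [Finset.sum_Icc_succ_top (by omega), ih, Finset.sum_range_succ]

lemma Filter.Tendsto.cesaro_Icc {u : ℕ → ℝ} {l : ℝ} (h : Tendsto u atTop (𝓝 l)) :
    Tendsto (fun m : ℕ => (1 / (m : ℝ)) * ∑ i ∈ Finset.Icc 1 m, u i) atTop (𝓝 l) := by
  simp_rw [one_div, sum_Icc_one_eq_sum_range]
  exact (h.comp (tendsto_add_atTop_nat 1)).cesaro

lemma Filter.Tendsto.cesaro_Icc_mul {u : ℕ → ℝ} {w : ℕ → ℕ → ℝ} {l A : ℝ}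
    (hu : Tendsto u atTop (𝓝 l)) (hw : ∀ m, ∀ i ∈ Finset.Icc 1 m, |w m i| ≤ 1)
    (hW : Tendsto (fun m : ℕ => (1 / (m : ℝ)) * ∑ i ∈ Finset.Icc 1 m, w m i) atTop (𝓝 A)) :
    Tendsto (fun m : ℕ => (1 / (m : ℝ)) * ∑ i ∈ Finset.Icc 1 m, u i * w m i)
      atTop (𝓝 (l * A)) := by
  have herr : Tendsto (fun m : ℕ => (1 / (m : ℝ)) * ∑ i ∈ Finset.Icc 1 m, (u i - l) * w m i)
      atTop (𝓝 0) := by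
    have hmean := (hu.sub_const l).abs.cesaro_Icc
    rw [sub_self, abs_zero] at hmean
    refine squeeze_zero_norm (fun m => ?_) hmean
    rw [norm_mul, Real.norm_of_nonneg (by positivity)]
    gcongr
    refine (Finset.abs_sum_le_sum_abs _ _).trans (Finset.sum_le_sum fun i hi => ?_)
    rw [abs_mul]
    exact mul_le_of_le_one_right (abs_nonneg _) (hw m i hi)
  convert (hW.const_mul l).add herr using 2 with m
  · simp only [sub_mul, Finset.sum_sub_distrib, ← Finset.mul_sum]
    ring
  · rw [add_zero]

lemma MonotoneOn.comp_div_natCast {f : ℝ → ℝ} (hf : MonotoneOn f (Set.Icc 0 1)) {m : ℕ}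
    (hm : 0 < m) : MonotoneOn (fun x => f (x / m)) (Set.Icc 0 (0 + m)) := by
  have hm' : (0 : ℝ) < m := by exact_mod_cast hm
  have hmaps : ∀ x ∈ Set.Icc (0 : ℝ) (0 + m), x / m ∈ Set.Icc (0 : ℝ) 1 := fun x hx =>
    ⟨div_nonneg hx.1 hm'.le, (div_le_one hm').2 (by simpa using hx.2)⟩
  intro x hx y hy hxy
  exact hf (hmaps x hx) (hmaps y hy) (by gcongr)

lemma integral_comp_div_natCast (f : ℝ → ℝ) {m : ℕ} (hm : 0 < m) :
    ∫ x in (0 : ℝ)..0 + m, f (x / m) = m * ∫ x in (0 : ℝ)..1, f x := by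
  have hm' : (m : ℝ) ≠ 0 := by positivity
  rw [intervalIntegral.integral_comp_div f hm', zero_add, zero_div, div_self hm', smul_eq_mul]

lemma MonotoneOn.integral_le_riemannSum {f : ℝ → ℝ} (hf : MonotoneOn f (Set.Icc 0 1)) {m : ℕ}
    (hm : 0 < m) :
    ∫ x in (0 : ℝ)..1, f x ≤ (1 / (m : ℝ)) * ∑ i ∈ Finset.Icc 1 m, f (i / m) := by
  have hm' : (0 : ℝ) < m := by exact_mod_cast hm
  have h := (hf.comp_div_natCast hm).integral_le_sum
  rw [integral_comp_div_natCast f hm] at h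
  rw [sum_Icc_one_eq_sum_range, one_div, ← div_eq_inv_mul, le_div_iff₀ hm', mul_comm]
  simpa only [zero_add, Nat.cast_add, Nat.cast_one] using h

lemma MonotoneOn.riemannSum_le_integral_add {f : ℝ → ℝ} (hf : MonotoneOn f (Set.Icc 0 1))
    {m : ℕ} (hm : 0 < m) :
    (1 / (m : ℝ)) * ∑ i ∈ Finset.Icc 1 m, f (i / m) ≤
      (∫ x in (0 : ℝ)..1, f x) + (f 1 - f 0) / m := by
  have hm' : (0 : ℝ) < m := by exact_mod_cast hm
  have h := (hf.comp_div_natCast hm).sum_le_integral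
  rw [integral_comp_div_natCast f hm] at h
  have htel :
      ∑ i ∈ Finset.Icc 1 m, f (i / m) = ∑ k ∈ Finset.range m, f (k / m) + (f 1 - f 0) := by
    have h₁ := Finset.sum_range_succ (fun k : ℕ => f (k / m)) m
    have h₂ := Finset.sum_range_succ' (fun k : ℕ => f (k / m)) m
    rw [div_self hm'.ne'] at h₁
    rw [sum_Icc_one_eq_sum_range]
    push_cast at h₁ h₂ ⊢
    rw [zero_div] at h₂
    linarith
  rw [htel, one_div, ← div_eq_inv_mul, div_le_iff₀ hm', add_mul, div_mul_cancel₀ _ hm'.ne']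
  simp only [zero_add] at h
  linarith

lemma MonotoneOn.tendsto_riemannSum {f : ℝ → ℝ} (hf : MonotoneOn f (Set.Icc 0 1)) :
    Tendsto (fun m : ℕ => (1 / (m : ℝ)) * ∑ i ∈ Finset.Icc 1 m, f (i / m)) atTop
      (𝓝 (∫ x in (0 : ℝ)..1, f x)) := by
  have hupper : Tendsto (fun m : ℕ => (∫ x in (0 : ℝ)..1, f x) + (f 1 - f 0) / m) atTop
      (𝓝 (∫ x in (0 : ℝ)..1, f x)) := by
    simpa using tendsto_const_nhds.add (tendsto_const_div_atTop_nhds_zero_nat (f 1 - f 0))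
  refine tendsto_of_tendsto_of_tendsto_of_le_of_le' tendsto_const_nhds hupper ?_ ?_ <;>
    filter_upwards [eventually_gt_atTop 0] with m hm
  exacts [hf.integral_le_riemannSum hm, hf.riemannSum_le_integral_add hm]

lemma tendsto_riemannSum_rpow {ρ : ℝ} (hρ : 0 < ρ) :
    Tendsto (fun m : ℕ => (1 / (m : ℝ)) * ∑ i ∈ Finset.Icc 1 m, ((i : ℝ) / m) ^ ρ) atTop
      (𝓝 (1 / (1 + ρ))) := by
  have hmono : MonotoneOn (fun x : ℝ => x ^ ρ) (Set.Icc 0 1) := fun x hx y _ hxy =>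
    rpow_le_rpow hx.1 hxy hρ.le
  have hint : ∫ x in (0 : ℝ)..1, x ^ ρ = 1 / (1 + ρ) := by
    rw [integral_rpow (Or.inl (by linarith)), one_rpow, zero_rpow (by linarith), add_comm]
    ring
  simpa only [hint] using hmono.tendsto_riemannSum

lemma Filter.Tendsto.comp_add_div_natCast {a : ℕ → ℝ} {L : ℝ}
    (h : Tendsto (fun n : ℕ => a n / n) atTop (𝓝 L)) (k : ℕ) :
    Tendsto (fun n : ℕ => a (n + k) / n) atTop (𝓝 L) := by
  have hratio : Tendsto (fun n : ℕ => ((n : ℝ) / (n + k))⁻¹) atTop (𝓝 1) := by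
    simpa using (tendsto_natCast_div_add_atTop (k : ℝ)).inv₀ one_ne_zero
  have := (h.comp (tendsto_add_atTop_nat k)).mul hratio
  rw [mul_one] at this
  refine this.congr' ?_
  filter_upwards [eventually_gt_atTop 0] with n hn
  have hn' : (n : ℝ) ≠ 0 := by positivity
  simp only [Function.comp_apply, Nat.cast_add]
  field_simp

lemma rpow_div_eq_mul_rpow_div {x y : ℝ} {i m : ℕ} (hx : 0 < x) (hy : 0 < y) (hi : 0 < i)
    (hm : 0 < m) (ρ : ℝ) :
    (x / y) ^ ρ = (x / i) ^ ρ * ((i : ℝ) / m) ^ ρ / (y / m) ^ ρ := by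
  have hi' : (0 : ℝ) < i := by exact_mod_cast hi
  have hm' : (0 : ℝ) < m := by exact_mod_cast hm
  rw [← mul_rpow (by positivity) (by positivity), ← div_rpow (by positivity) (by positivity)]
  congr 1
  field_simp

lemma tendsto_mean_rpow_ratio {b : ℕ → ℝ} {L ρ : ℝ} (hρ : 0 < ρ) (hL : 0 < L)
    (hb : ∀ n, 0 < b n) (hlim : Tendsto (fun n : ℕ => b n / n) atTop (𝓝 L)) :
    Tendsto (fun m : ℕ => (1 / (m : ℝ)) * ∑ i ∈ Finset.Icc 1 m, (b i / b m) ^ ρ) atTop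
      (𝓝 (1 / (1 + ρ))) := by
  set c : ℕ → ℝ := fun n => (b n / n) ^ ρ
  have hc : Tendsto c atTop (𝓝 (L ^ ρ)) := hlim.rpow_const (Or.inl hL.ne')
  have hweight : ∀ m : ℕ, ∀ i ∈ Finset.Icc 1 m, |((i : ℝ) / m) ^ ρ| ≤ 1 := fun m i hi => by
    have him : (i : ℝ) ≤ m := by exact_mod_cast (Finset.mem_Icc.1 hi).2
    rw [abs_of_nonneg (by positivity)]
    exact rpow_le_one (by positivity) (div_le_one_of_le₀ him (by positivity)) hρ.le
  have hLρ : L ^ ρ ≠ 0 := (rpow_pos_of_pos hL ρ).ne'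
  have hmean := (hc.cesaro_Icc_mul hweight (tendsto_riemannSum_rpow hρ)).div hc hLρ
  rw [mul_div_cancel_left₀ _ hLρ] at hmean
  refine hmean.congr' ?_
  filter_upwards [eventually_gt_atTop 0] with m hm
  rw [Pi.div_apply, mul_div_assoc, Finset.sum_div]
  refine congrArg _ (Finset.sum_congr rfl fun i hi => ?_)
  exact (rpow_div_eq_mul_rpow_div (hb i) (hb m) (Finset.mem_Icc.1 hi).1 hm ρ).symm

lemma expMeasure_Iic_zero {r : ℝ} (hr : 0 < r) : expMeasure r (Set.Iic 0) = 0 := by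
  have := isProbabilityMeasure_expMeasure hr
  have h := cdf_expMeasure_eq hr 0
  rw [cdf_eq_real, if_pos le_rfl, mul_zero, neg_zero, exp_zero, sub_self] at h
  exact (measureReal_eq_zero_iff (measure_ne_top _ _)).1 h

lemma integral_id_expMeasure {r : ℝ} (hr : 0 < r) : ∫ x, x ∂expMeasure r = 1 / r := by
  have hdens : ∀ x, (exponentialPDF r x).toReal = exponentialPDFReal r x := fun x =>
    ENNReal.toReal_ofReal (exponentialPDFReal_nonneg hr x)
  have hvanish : ∀ x ∉ Set.Ioi (0 : ℝ), exponentialPDFReal r x * x = 0 := fun x hx => by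
    rcases (Set.notMem_Ioi.1 hx).lt_or_eq with hneg | rfl
    · simp [exponentialPDFReal, gammaPDFReal, hneg.not_ge]
    · rw [mul_zero]
  calc ∫ x, x ∂expMeasure r
      = ∫ x, exponentialPDFReal r x * x := by
        rw [show expMeasure r = volume.withDensity (exponentialPDF r) from rfl,
          integral_withDensity_eq_integral_toReal_smul (f := exponentialPDF r)
            (measurable_exponentialPDFReal r).ennreal_ofReal
            (ae_of_all _ fun _ => ENNReal.ofReal_lt_top)]
        simp only [hdens, smul_eq_mul]
    _ = ∫ x in Set.Ioi 0, r * (x ^ ((2 : ℝ) - 1) * exp (-(r * x))) := by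
        rw [← setIntegral_eq_integral_of_forall_compl_eq_zero hvanish]
        refine setIntegral_congr_fun measurableSet_Ioi fun x (hx : 0 < x) => ?_
        simp only [exponentialPDFReal, gammaPDFReal, if_pos hx.le]
        norm_num
        ring
    _ = 1 / r := by
        rw [integral_const_mul, integral_rpow_mul_exp_neg_mul_Ioi two_pos hr, Gamma_two, mul_one,
          rpow_two]
        field_simp

namespace IIDStdExp

variable {Ω : Type*} [MeasurableSpace Ω] {P : Measure Ω} {E : ℕ → Ω → ℝ}

lemma identDistrib (hE : IIDStdExp P E) (i : ℕ) : IdentDistrib (E i) id P (expMeasure 1) :=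
  ⟨(hE.2 i).1.aemeasurable, aemeasurable_id, by rw [(hE.2 i).2, Measure.map_id]⟩

lemma ae_pos (hE : IIDStdExp P E) : ∀ᵐ ω ∂P, ∀ i, 0 < E i ω := by
  refine ae_all_iff.2 fun i => ?_
  have h := (hE.identDistrib i).measure_mem_eq measurableSet_Iic (s := Set.Iic 0)
  rw [Set.preimage_id, expMeasure_Iic_zero one_pos] at h
  exact measure_mono_null (fun ω (hω : ¬0 < E i ω) => not_lt.1 hω) h

lemma ae_tendsto_gammaSum_div (hE : IIDStdExp P E) :
    ∀ᵐ ω ∂P, Tendsto (fun n : ℕ => gammaSum E n ω / n) atTop (𝓝 1) := by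
  have hid := hE.identDistrib 0
  have hexp : ∫ x, id x ∂expMeasure 1 = 1 := (integral_id_expMeasure one_pos).trans (div_one 1)
  have hint : Integrable (E 0) P :=
    hid.integrable_iff.2 (.of_integral_ne_zero (by rw [hexp]; exact one_ne_zero))
  have hsame : ∀ i, IdentDistrib (E i) (E 0) P P := fun i => (hE.identDistrib i).trans hid.symm
  simpa only [hid.integral_eq, hexp, gammaSum] using
    strong_law_ae_real E hint (fun i j hij => hE.1.indepFun hij) hsame

end IIDStdExp

theorem gammaSum_power_mean_as_convergence_general
    {Ω : Type*} [MeasurableSpace Ω] (P : Measure Ω)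
    (ρ : ℝ) (hρ : 0 < ρ) (E : ℕ → Ω → ℝ) (hE : IIDStdExp P E) :
    ∀ᵐ ω ∂P,
      Tendsto
        (fun m : ℕ => (1 / (m : ℝ)) *
          ∑ i ∈ Finset.Icc 1 m, (gammaSum E (i + 1) ω / gammaSum E (m + 1) ω) ^ ρ)
        atTop (𝓝 (1 / (1 + ρ))) := by
  filter_upwards [hE.ae_tendsto_gammaSum_div, hE.ae_pos] with ω hlim hpos
  have hsum_pos : ∀ n, 0 < gammaSum E (n + 1) ω := fun n =>
    Finset.sum_pos (fun i _ => hpos i) Finset.nonempty_range_add_one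
  exact tendsto_mean_rpow_ratio hρ one_pos hsum_pos (hlim.comp_add_div_natCast 1)

/-- For every `ρ > 0`,
`(1/m) Σ_{i=1}^m (Γ_{i+1}/Γ_{m+1})^ρ → 1/(1+ρ)` almost surely as `m → ∞`. -/
theorem gammaSum_power_mean_as_convergence
    {Ω : Type*} [MeasurableSpace Ω] (P : Measure Ω) [IsProbabilityMeasure P]
    (ρ : ℝ) (hρ : 0 < ρ) (E : ℕ → Ω → ℝ) (hE : IIDStdExp P E) :
    ∀ᵐ ω ∂P,
      Tendsto
        (fun m : ℕ => (1 / (m : ℝ)) *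
          ∑ i ∈ Finset.Icc 1 m, (gammaSum E (i + 1) ω / gammaSum E (m + 1) ω) ^ ρ)
        atTop (𝓝 (1 / (1 + ρ))) :=
  gammaSum_power_mean_as_convergence_general P ρ hρ E hE

end
end
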